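/- Let n ≥ 1, let P be a partition of {1,…,n}, let t assign to each block of P a type in {A, D, B, C, BC} such that every block of type D has at least two elements, and let Φ = ⋃_{B∈P} Φ_{t(B)}(B). Define the linear map π : ℝ^n → ℝ^n by π(e_i) = (1/|B_i|) Σ_{j∈B_i} e_j if the block B_i containing i has type A, and π(e_i) = 0 otherwise. Then π is the orthogonal projection of ℝ^n onto Ker(Φ) := {v ∈ ℝ^n : ⟨α,v⟩ = 0 for all α ∈ Φ}; that is, π(v) ∈ Ker(Φ) for all v, π(u) = u for all u ∈ Ker(Φ), and ⟨π(v), u⟩ = ⟨v, u⟩ for all v ∈ ℝ^n and u ∈ Ker(Φ). -/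
import Mathlib


open Finset

noncomputable section

/-- Standard basis vector `e i` of `ℝ^n`. -/
def E {n : ℕ} (i : Fin n) : Fin n → ℝ := Pi.single i 1

/-- Standard inner product on `ℝ^n`. -/
def dot {n : ℕ} (v w : Fin n → ℝ) : ℝ := ∑ i, v i * w i

/-- Reflection across the hyperplane orthogonal to `α`. -/
def reflRoot {n : ℕ} (α v : Fin n → ℝ) : Fin n → ℝ := v - (2 * dot v α / dot α α) • α

/-- The root system `A_{n-1}`. -/
def Aset (n : ℕ) : Set (Fin n → ℝ) := {α | ∃ i j : Fin n, i ≠ j ∧ α = E i - E j}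

/-- The root system `D_n`. -/
def Dset (n : ℕ) : Set (Fin n → ℝ) :=
  {α | ∃ i j : Fin n, i ≠ j ∧ (α = E i - E j ∨ α = E i + E j ∨ α = -(E i + E j))}

/-- The root system `B_n`. -/
def Bset (n : ℕ) : Set (Fin n → ℝ) := Dset n ∪ {α | ∃ i : Fin n, α = E i ∨ α = -E i}

/-- The root system `C_n`. -/
def Cset (n : ℕ) : Set (Fin n → ℝ) :=
  Dset n ∪ {α | ∃ i : Fin n, α = (2:ℝ) • E i ∨ α = -((2:ℝ) • E i)}

/-- The nonreduced root system `BC_n`. -/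
def BCset (n : ℕ) : Set (Fin n → ℝ) := Bset n ∪ Cset n

/-- Types of classical irreducible root (sub)systems. -/
inductive RType | A | D | B | C | BC
deriving DecidableEq

/-- Type-`A` system on a block `B`. -/
def PhiA {n : ℕ} (B : Finset (Fin n)) : Set (Fin n → ℝ) :=
  {α | ∃ i ∈ B, ∃ j ∈ B, i ≠ j ∧ α = E i - E j}

/-- Type-`D` system on a block `B`. -/
def PhiD {n : ℕ} (B : Finset (Fin n)) : Set (Fin n → ℝ) :=
  {α | ∃ i ∈ B, ∃ j ∈ B, i ≠ j ∧ (α = E i - E j ∨ α = E i + E j ∨ α = -(E i + E j))}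

/-- Type-`B` system on a block `B`. -/
def PhiB {n : ℕ} (B : Finset (Fin n)) : Set (Fin n → ℝ) :=
  PhiD B ∪ {α | ∃ i ∈ B, α = E i ∨ α = -E i}

/-- Type-`C` system on a block `B`. -/
def PhiC {n : ℕ} (B : Finset (Fin n)) : Set (Fin n → ℝ) :=
  PhiD B ∪ {α | ∃ i ∈ B, α = (2:ℝ) • E i ∨ α = -((2:ℝ) • E i)}

/-- Type-`BC` system on a block `B`. -/
def PhiBC {n : ℕ} (B : Finset (Fin n)) : Set (Fin n → ℝ) := PhiB B ∪ PhiC B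

/-- The classical system of the given type on a block. -/
def PhiOf {n : ℕ} : RType → Finset (Fin n) → Set (Fin n → ℝ)
  | RType.A => PhiA
  | RType.D => PhiD
  | RType.B => PhiB
  | RType.C => PhiC
  | RType.BC => PhiBC


section Helpers
variable {n : ℕ}

lemma dot_E (u : Fin n → ℝ) (i : Fin n) : dot (E i) u = u i := by
  simp [dot, E, Pi.single_apply, ite_mul]

lemma dot_sub (a b u : Fin n → ℝ) : dot (a - b) u = dot a u - dot b u := by
  simp [dot, sub_mul, Finset.sum_sub_distrib]

lemma dot_add (a b u : Fin n → ℝ) : dot (a + b) u = dot a u + dot b u := by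
  simp [dot, add_mul, Finset.sum_add_distrib]

lemma dot_neg (a u : Fin n → ℝ) : dot (-a) u = -dot a u := by
  simp [dot]

lemma dot_smul (c : ℝ) (a u : Fin n → ℝ) : dot (c • a) u = c * dot a u := by
  simp [dot, mul_assoc, Finset.mul_sum]

lemma ker_char (blk : Fin n → Finset (Fin n)) (t : Finset (Fin n) → RType)
    (hblk1 : ∀ i, i ∈ blk i) (hblk2 : ∀ i j, j ∈ blk i → blk j = blk i)
    (hD : ∀ i, t (blk i) = RType.D → 2 ≤ (blk i).card) (u : Fin n → ℝ) :
    (∀ α ∈ ⋃ i, PhiOf (t (blk i)) (blk i), dot α u = 0) ↔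
    (∀ i : Fin n, (t (blk i) = RType.A → ∀ j ∈ blk i, u j = u i) ∧
      (t (blk i) ≠ RType.A → u i = 0)) := by
  constructor
  · intro h i
    have hmem : ∀ α, α ∈ PhiOf (t (blk i)) (blk i) → dot α u = 0 := fun α hα =>
      h α (Set.mem_iUnion.mpr ⟨i, hα⟩)
    constructor
    · intro hA j hj
      by_cases hji : j = i
      · rw [hji]
      · have := hmem (E j - E i) (by rw [hA]; exact ⟨j, hj, i, hblk1 i, hji, rfl⟩)
        rw [dot_sub, dot_E, dot_E] at this
        linarith
    · intro hNA
      rcases htype : t (blk i) with _ | _ | _ | _ | _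
      · exact absurd htype hNA
      · obtain ⟨j, hj, hji⟩ := Finset.exists_mem_ne (hD i htype) i
        have h1 := hmem (E i - E j)
          (by rw [htype]; exact ⟨i, hblk1 i, j, hj, Ne.symm hji, Or.inl rfl⟩)
        have h2 := hmem (E i + E j)
          (by rw [htype]; exact ⟨i, hblk1 i, j, hj, Ne.symm hji, Or.inr (Or.inl rfl)⟩)
        rw [dot_sub, dot_E, dot_E] at h1
        rw [dot_add, dot_E, dot_E] at h2
        linarith
      · have := hmem (E i) (by rw [htype]; exact Or.inr ⟨i, hblk1 i, Or.inl rfl⟩)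
        rwa [dot_E] at this
      · have := hmem ((2:ℝ) • E i) (by rw [htype]; exact Or.inr ⟨i, hblk1 i, Or.inl rfl⟩)
        rw [dot_smul, dot_E] at this
        linarith
      · have := hmem (E i)
          (by rw [htype]; exact Or.inl (Or.inr ⟨i, hblk1 i, Or.inl rfl⟩))
        rwa [dot_E] at this
  · intro h α hα
    rw [Set.mem_iUnion] at hα
    obtain ⟨i₀, hα⟩ := hα
    have hz : t (blk i₀) ≠ RType.A → ∀ i ∈ blk i₀, u i = 0 := by
      intro hNA i hi
      exact (h i).2 (by rw [hblk2 i₀ i hi]; exact hNA)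
    have hcD : ∀ β, t (blk i₀) ≠ RType.A → β ∈ PhiD (blk i₀) → dot β u = 0 := by
      rintro β hNA ⟨i, hi, j, hj, hij, (rfl | rfl | rfl)⟩ <;>
        simp [dot_sub, dot_add, dot_neg, dot_E, hz hNA i hi, hz hNA j hj]
    have hcB : ∀ β, t (blk i₀) ≠ RType.A → β ∈ PhiB (blk i₀) → dot β u = 0 := by
      rintro β hNA (hβ | ⟨i, hi, (rfl | rfl)⟩)
      · exact hcD β hNA hβ
      · simp [dot_E, hz hNA i hi]
      · simp [dot_neg, dot_E, hz hNA i hi]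
    have hcC : ∀ β, t (blk i₀) ≠ RType.A → β ∈ PhiC (blk i₀) → dot β u = 0 := by
      rintro β hNA (hβ | ⟨i, hi, (rfl | rfl)⟩)
      · exact hcD β hNA hβ
      · simp [dot_smul, dot_E, hz hNA i hi]
      · simp [dot_neg, dot_smul, dot_E, hz hNA i hi]
    rcases htype : t (blk i₀) with _ | _ | _ | _ | _ <;> rw [htype] at hα
    · obtain ⟨i, hi, j, hj, hij, rfl⟩ := hα
      have h1 := (h i₀).1 htype i hi
      have h2 := (h i₀).1 htype j hj
      simp [dot_sub, dot_E, h1, h2]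
    · exact hcD α (by simp [htype]) hα
    · exact hcB α (by simp [htype]) hα
    · exact hcC α (by simp [htype]) hα
    · rcases hα with hα | hα
      · exact hcB α (by simp [htype]) hα
      · exact hcC α (by simp [htype]) hα

end Helpers

/-- The map `π` averaging over type-`A` blocks is the orthogonal projection onto the
kernel of a root subsystem in standard form. -/
theorem stmt5 (n : ℕ) (hn : 1 ≤ n)
    (blk : Fin n → Finset (Fin n)) (hblk1 : ∀ i, i ∈ blk i)
    (hblk2 : ∀ i j, j ∈ blk i → blk j = blk i)
    (t : Finset (Fin n) → RType)
    (hD : ∀ i, t (blk i) = RType.D → 2 ≤ (blk i).card)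
    (π : (Fin n → ℝ) → (Fin n → ℝ))
    (hπ : ∀ v j, π v j =
      if t (blk j) = RType.A then (∑ i ∈ blk j, v i) / ((blk j).card : ℝ) else 0) :
    (∀ v, π v ∈ {u : Fin n → ℝ | ∀ α ∈ ⋃ i, PhiOf (t (blk i)) (blk i), dot α u = 0}) ∧
    (∀ u ∈ {u : Fin n → ℝ | ∀ α ∈ ⋃ i, PhiOf (t (blk i)) (blk i), dot α u = 0}, π u = u) ∧
    (∀ v : Fin n → ℝ,
      ∀ u ∈ {u : Fin n → ℝ | ∀ α ∈ ⋃ i, PhiOf (t (blk i)) (blk i), dot α u = 0},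
        dot (π v) u = dot v u) := by
  have key := ker_char blk t hblk1 hblk2 hD
  have hcardpos : ∀ j : Fin n, (0:ℝ) < (blk j).card := fun j => by
    exact_mod_cast Finset.card_pos.mpr ⟨j, hblk1 j⟩
  refine ⟨?_, ?_, ?_⟩
  · intro v
    rw [Set.mem_setOf_eq, key]
    intro i
    constructor
    · intro hA j hj
      rw [hπ, hπ, hblk2 i j hj]
    · intro hNA
      rw [hπ, if_neg hNA]
  · intro u hu
    rw [Set.mem_setOf_eq, key] at hu
    funext j
    rw [hπ]
    split
    · next hA =>
        have hconst : ∀ i ∈ blk j, u i = u j := (hu j).1 hA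
        have hc : ((blk j).card : ℝ) ≠ 0 := ne_of_gt (hcardpos j)
        rw [Finset.sum_congr rfl hconst, Finset.sum_const, nsmul_eq_mul,
          mul_comm, mul_div_assoc, div_self hc, mul_one]
    · next hNA => exact ((hu j).2 hNA).symm
  · intro v u hu
    rw [Set.mem_setOf_eq, key] at hu
    have hsym : ∀ i j : Fin n, i ∈ blk j ↔ j ∈ blk i := by
      intro i j
      constructor <;> intro h
      · rw [hblk2 j i h]; exact hblk1 j
      · rw [hblk2 i j h]; exact hblk1 i
    have hcne : ∀ j : Fin n, ((blk j).card : ℝ) ≠ 0 := fun j => ne_of_gt (hcardpos j)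
    set F : Fin n → Fin n → ℝ := fun i j =>
      if t (blk i) = RType.A ∧ i ∈ blk j then v i * u i / ((blk i).card : ℝ) else 0 with hF
    have step1 : dot (π v) u = ∑ j, ∑ i, F i j := by
      unfold dot
      refine Finset.sum_congr rfl fun j _ => ?_
      rw [hπ]
      by_cases hA : t (blk j) = RType.A
      · rw [if_pos hA]
        have key2 : ∀ i : Fin n, F i j =
            if i ∈ blk j then v i * u j / ((blk j).card : ℝ) else 0 := by
          intro i
          simp only [hF]
          by_cases hi : i ∈ blk j
          · rw [if_pos hi]
            rw [if_pos ⟨by rw [hblk2 j i hi]; exact hA, hi⟩]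
            rw [hblk2 j i hi, (hu j).1 hA i hi]
          · rw [if_neg hi, if_neg (fun hc => hi hc.2)]
        rw [Finset.sum_congr rfl fun i _ => key2 i]
        rw [Finset.sum_ite_mem, Finset.univ_inter, ← Finset.sum_div, ← Finset.sum_mul]
        ring
      · rw [if_neg hA, zero_mul]
        symm
        refine Finset.sum_eq_zero fun i _ => ?_
        simp only [hF]
        refine if_neg ?_
        rintro ⟨hiA, hij⟩
        exact hA (by rw [← hblk2 j i hij]; exact hiA)
    have step2 : ∑ i, ∑ j, F i j = dot v u := by
      unfold dot
      refine Finset.sum_congr rfl fun i _ => ?_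
      by_cases hA : t (blk i) = RType.A
      · have key2 : ∀ j : Fin n, F i j =
            if j ∈ blk i then v i * u i / ((blk i).card : ℝ) else 0 := by
          intro j
          simp only [hF]
          by_cases hj : j ∈ blk i
          · rw [if_pos hj, if_pos ⟨hA, (hsym i j).mpr hj⟩]
          · rw [if_neg hj, if_neg (fun hc => hj ((hsym i j).mp hc.2))]
        rw [Finset.sum_congr rfl fun j _ => key2 j, Finset.sum_ite_mem,
          Finset.univ_inter, Finset.sum_const, nsmul_eq_mul, mul_div_assoc',
          mul_comm, mul_div_assoc, div_self (hcne i), mul_one]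
      · have key2 : ∀ j : Fin n, F i j = 0 := by
          intro j
          simp only [hF]
          exact if_neg (fun hc => hA hc.1)
        rw [Finset.sum_congr rfl fun j _ => key2 j, Finset.sum_const_zero]
        rw [((hu i).2 hA), mul_zero]
    rw [step1, Finset.sum_comm, step2]
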